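/- arXiv:1406.3048 — 3 statements merged into one kernel-verified Lean document; each statement's English description precedes it below -/
import Mathlib

section
/- For p ∈ ℤ₊ⁿ, the Lebesgue volume of Ω_p^n = {z ∈ ℂⁿ : Σ_j |z_j|^{2p_j} < 1} equals πⁿ · ∏_{j=1}^n Γ(1/p_j) / ( (∏_{j=1}^n p_j) · Γ(Σ_{j=1}^n 1/p_j + 1) ). -/
/-!
Put `g z = ∑ j, ‖z j‖ ^ q j` with `q j = 2 p j`. Writing `exp (-g z) = ∫_{t > g z} exp (-t) dt` and
applying Tonelli gives `∫ exp (-g) = ∫_{t > 0} exp (-t) vol {g < t} dt`. The coordinatewise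
dilation `z j ↦ t ^ (1 / q j) • z j` maps `{g < 1}` onto `{g < t}` and scales volume by
`t ^ (∑ j, 2 / q j)`, so the right-hand side is `Γ (∑ j, 2 / q j + 1) vol {g < 1}`. On the other
hand `exp (-g)` is a product of functions of one coordinate each, so its integral is
`∏ j, π Γ (2 / q j + 1)`.
-/

open MeasureTheory Real Module

section LayerCake

variable {α : Type*} [MeasurableSpace α] (μ : Measure α) {g : α → ℝ}

theorem lintegral_exp_neg_eq_setLIntegral_measure_lt [SFinite μ] (hg : Measurable g)
    (hg0 : ∀ x, 0 ≤ g x) :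
    ∫⁻ x, ENNReal.ofReal (exp (-g x)) ∂μ =
      ∫⁻ t in Set.Ioi 0, ENNReal.ofReal (exp (-t)) * μ {x | g x < t} := by
  set F := {q : α × ℝ | g q.1 < q.2}.indicator fun q ↦ ENNReal.ofReal (exp (-q.2))
  have hF : Measurable F :=
    (measurable_snd.neg.exp.ennreal_ofReal).indicator
      (measurableSet_lt (hg.comp measurable_fst) measurable_snd)
  have h_slice_t (x : α) : ENNReal.ofReal (exp (-g x)) = ∫⁻ t in Set.Ioi 0, F (x, t) := by
    have hF_t :
        (fun t ↦ F (x, t)) = (Set.Ioi (g x)).indicator fun t ↦ ENNReal.ofReal (exp (-t)) := rfl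
    rw [hF_t, setLIntegral_indicator measurableSet_Ioi,
      Set.inter_eq_self_of_subset_left (Set.Ioi_subset_Ioi (hg0 x)),
      ← ofReal_integral_eq_lintegral_ofReal
        (by simpa using (exp_neg_integrableOn_Ioi (g x) one_pos).integrable)
        (.of_forall fun _ ↦ (exp_pos _).le), integral_exp_neg_Ioi]
  have h_slice_x (t : ℝ) : ∫⁻ x, F (x, t) ∂μ = ENNReal.ofReal (exp (-t)) * μ {x | g x < t} := by
    have hF_x :
        (fun x ↦ F (x, t)) = {x | g x < t}.indicator fun _ ↦ ENNReal.ofReal (exp (-t)) := rfl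
    rw [hF_x, lintegral_indicator_const (measurableSet_lt hg measurable_const)]
  simp_rw [h_slice_t, ← h_slice_x]
  exact lintegral_lintegral_swap hF.aemeasurable

theorem lintegral_exp_neg_eq_gamma_mul_measure [SFinite μ] (hg : Measurable g)
    (hg0 : ∀ x, 0 ≤ g x) {s : ℝ} (hs : -1 < s)
    (hscale : ∀ t > 0, μ {x | g x < t} = ENNReal.ofReal (t ^ s) * μ {x | g x < 1}) :
    ∫⁻ x, ENNReal.ofReal (exp (-g x)) ∂μ = ENNReal.ofReal (Gamma (s + 1)) * μ {x | g x < 1} := by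
  have hs1 : 0 < s + 1 := by linarith
  have hGamma : ∫⁻ t in Set.Ioi 0, ENNReal.ofReal (exp (-t) * t ^ s) =
      ENNReal.ofReal (Gamma (s + 1)) := by
    rw [Gamma_eq_integral hs1, add_sub_cancel_right, ofReal_integral_eq_lintegral_ofReal]
    · simpa using (GammaIntegral_convergent hs1).integrable
    · exact (ae_restrict_iff' measurableSet_Ioi).2 (.of_forall fun t ht ↦ by
        have : 0 < t := ht; positivity)
  calc ∫⁻ x, ENNReal.ofReal (exp (-g x)) ∂μ
      = ∫⁻ t in Set.Ioi 0, ENNReal.ofReal (exp (-t) * t ^ s) * μ {x | g x < 1} := by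
        rw [lintegral_exp_neg_eq_setLIntegral_measure_lt μ hg hg0]
        refine setLIntegral_congr_fun measurableSet_Ioi fun t ht ↦ ?_
        rw [hscale t ht, ← mul_assoc, ← ENNReal.ofReal_mul (exp_pos _).le]
    _ = ENNReal.ofReal (Gamma (s + 1)) * μ {x | g x < 1} := by
        rw [lintegral_mul_const _ (by fun_prop), hGamma]

end LayerCake

section Scaling

variable {ι E : Type*} [Fintype ι] [NormedAddCommGroup E] [NormedSpace ℝ E] [MeasurableSpace E]
  [BorelSpace E] [FiniteDimensional ℝ E] (μ : Measure (ι → E)) [μ.IsAddHaarMeasure]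

theorem addHaar_preimage_pi_smul {c : ι → ℝ} (hc : ∀ i, c i ≠ 0) (s : Set (ι → E)) :
    μ ((fun x i ↦ c i • x i) ⁻¹' s) =
      ENNReal.ofReal |(∏ i, c i ^ finrank ℝ E)⁻¹| * μ s := by
  let f : (ι → E) →ₗ[ℝ] ι → E :=
    LinearMap.pi fun i ↦ (c i • LinearMap.id).comp (LinearMap.proj i)
  have hdet : LinearMap.det f = ∏ i, c i ^ finrank ℝ E := by
    simp [f, LinearMap.det_pi, LinearMap.det_smul]
  have hdet_ne : LinearMap.det f ≠ 0 :=
    hdet ▸ Finset.prod_ne_zero_iff.2 fun i _ ↦ pow_ne_zero _ (hc i)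
  rw [← hdet]
  exact Measure.addHaar_preimage_linearMap μ hdet_ne s

theorem addHaar_sum_norm_rpow_lt {q : ι → ℝ} (hq : ∀ i, 0 < q i) {t : ℝ} (ht : 0 < t) :
    μ {x | ∑ i, ‖x i‖ ^ q i < t} =
      ENNReal.ofReal (t ^ ∑ i, (finrank ℝ E : ℝ) / q i) * μ {x | ∑ i, ‖x i‖ ^ q i < 1} := by
  set c : ι → ℝ := fun i ↦ t ^ (-(q i)⁻¹)
  have hc : ∀ i, 0 < c i := fun i ↦ rpow_pos_of_pos ht _
  have hc_rpow (i : ι) : c i ^ q i = t⁻¹ := by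
    rw [← rpow_mul ht.le, neg_mul, inv_mul_cancel₀ (hq i).ne', rpow_neg_one]
  have hc_pow (i : ι) : c i ^ finrank ℝ E = t ^ (-((finrank ℝ E : ℝ) / q i)) := by
    rw [← rpow_natCast, ← rpow_mul ht.le]
    ring_nf
  have hpre : (fun (x : ι → E) i ↦ c i • x i) ⁻¹' {x : ι → E | ∑ i, ‖x i‖ ^ q i < 1} =
      {x | ∑ i, ‖x i‖ ^ q i < t} := by
    ext x
    simp only [Set.mem_preimage, Set.mem_ofPred_eq, norm_smul, norm_of_nonneg (hc _).le,
      mul_rpow (hc _).le (norm_nonneg _), hc_rpow, ← Finset.mul_sum, inv_mul_lt_iff₀ ht, mul_one]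
  rw [← hpre, addHaar_preimage_pi_smul μ fun i ↦ (hc i).ne']
  congr 2
  rw [Finset.prod_congr rfl fun i _ ↦ hc_pow i, ← rpow_sum_of_pos ht, Finset.sum_neg_distrib,
    rpow_neg ht.le, inv_inv, abs_of_pos (rpow_pos_of_pos ht _)]

end Scaling

section Complex

variable {ι : Type*} [Fintype ι]

theorem Complex.integral_exp_neg_sum_rpow {q : ι → ℝ} (hq : ∀ i, 1 ≤ q i) :
    ∫ z : ι → ℂ, rexp (-∑ i, ‖z i‖ ^ q i) = ∏ i, π * Real.Gamma (2 / q i + 1) := by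
  have (z : ι → ℂ) : rexp (-∑ i, ‖z i‖ ^ q i) = ∏ i, rexp (-‖z i‖ ^ q i) := by
    rw [← Finset.sum_neg_distrib, Real.exp_sum]
  simp_rw [this]
  rw [volume_pi, integral_fintype_prod_eq_prod (f := fun i (w : ℂ) ↦ rexp (-‖w‖ ^ q i))]
  exact Finset.prod_congr rfl fun i _ ↦ Complex.integral_exp_neg_rpow (hq i)

theorem Complex.volume_sum_norm_rpow_lt_one {q : ι → ℝ} (hq : ∀ i, 1 ≤ q i) :
    volume {z : ι → ℂ | ∑ i, ‖z i‖ ^ q i < 1} =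
      ENNReal.ofReal ((∏ i, π * Real.Gamma (2 / q i + 1)) / Real.Gamma (∑ i, 2 / q i + 1)) := by
  set g : (ι → ℂ) → ℝ := fun z ↦ ∑ i, ‖z i‖ ^ q i
  have hq0 (i : ι) : 0 < q i := zero_lt_one.trans_le (hq i)
  have hS : 0 ≤ ∑ i, 2 / q i := Finset.sum_nonneg fun i _ ↦ (div_pos two_pos (hq0 i)).le
  have hΓ : 0 < Real.Gamma (∑ i, 2 / q i + 1) := Real.Gamma_pos_of_pos (by linarith)
  have hscale (t : ℝ) (ht : 0 < t) :
      volume {z | g z < t} = ENNReal.ofReal (t ^ ∑ i, 2 / q i) * volume {z | g z < 1} := by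
    simpa [Complex.finrank_real_complex] using
      addHaar_sum_norm_rpow_lt (volume : Measure (ι → ℂ)) hq0 ht
  have hprod : 0 < ∏ i, π * Real.Gamma (2 / q i + 1) :=
    Finset.prod_pos fun i _ ↦
      mul_pos pi_pos (Real.Gamma_pos_of_pos (by have := hq0 i; positivity))
  have hint : Integrable fun z ↦ rexp (-g z) :=
    .of_integral_ne_zero (Complex.integral_exp_neg_sum_rpow hq ▸ hprod.ne')
  have key := lintegral_exp_neg_eq_gamma_mul_measure volume (by fun_prop)
    (fun z ↦ Finset.sum_nonneg fun i _ ↦ by positivity) (by linarith) hscale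
  rw [← ofReal_integral_eq_lintegral_ofReal hint (.of_forall fun _ ↦ (exp_pos _).le),
    Complex.integral_exp_neg_sum_rpow hq] at key
  rw [ENNReal.ofReal_div_of_pos hΓ, key, mul_comm,
    ENNReal.mul_div_cancel_right (ENNReal.ofReal_pos.2 hΓ).ne' ENNReal.ofReal_ne_top]

end Complex

/-- The volume of `Ω_p^n = {z ∈ ℂⁿ : Σ |z_j|^{2p_j} < 1}` equals
`πⁿ ∏ Γ(1/p_j) / ((∏ p_j) Γ(Σ 1/p_j + 1))`. -/
theorem volume_Omega (n : ℕ) (p : Fin n → ℕ) (hp : ∀ j, 0 < p j) :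
    (volume {z : Fin n → ℂ | ∑ j, ‖z j‖ ^ (2 * p j) < 1}).toReal =
      π ^ n * (∏ j, Real.Gamma (1 / p j)) /
        ((∏ j, (p j : ℝ)) * Real.Gamma ((∑ j, (1 : ℝ) / p j) + 1)) := by
  have hp_pos (j : Fin n) : (0 : ℝ) < p j := Nat.cast_pos.2 (hp j)
  have hq (j : Fin n) : (1 : ℝ) ≤ (2 * p j : ℕ) := by
    exact_mod_cast (by have := hp j; omega : 1 ≤ 2 * p j)
  have hset : {z : Fin n → ℂ | ∑ j, ‖z j‖ ^ (2 * p j) < 1} =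
      {z | ∑ j, ‖z j‖ ^ ((2 * p j : ℕ) : ℝ) < 1} := by
    simp_rw [rpow_natCast]
  have hexp (j : Fin n) : (2 : ℝ) / (2 * p j : ℕ) = 1 / p j := by
    push_cast
    field_simp
  have hfactor (j : Fin n) : π * Real.Gamma (1 / p j + 1) = π * Real.Gamma (1 / p j) / p j := by
    rw [Real.Gamma_add_one (by simpa using (hp_pos j).ne')]
    field_simp
  rw [hset, Complex.volume_sum_norm_rpow_lt_one hq, ENNReal.toReal_ofReal]
  · simp_rw [hexp, hfactor]
    rw [Finset.prod_div_distrib, Finset.prod_mul_distrib, Finset.prod_const, Finset.card_fin,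
      div_div]
  · positivity
end

section
/- For p ∈ ℤ₊ⁿ, the un-normalized hypersurface measure of 𝕊_p^n equals S(1) = 2πⁿ ∏_j Γ(1/p_j) / ( (∏_j p_j) · Γ(Σ_j 1/p_j) ). -/
/-!
Write `ρ(z) = ∑ⱼ ‖zⱼ‖^{2pⱼ}` and `s = ∑ⱼ 1/pⱼ`. Rescaling the coordinates by `zⱼ ↦ t^{-1/(2pⱼ)} zⱼ`
shows `vol {ρ < t} = t^s · vol {ρ < 1}`. Integrating `e^{-ρ}` over `ℂⁿ` once as a product of
one-variable integrals `π Γ(1/pⱼ + 1)` and once over the sublevel sets of `ρ`, which gives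
`Γ(s + 1) · vol {ρ < 1}`, yields `vol {ρ < 1}`. Then `V(r) = r^{2s} vol {ρ < 1}` and
`V'(1) = 2s · vol {ρ < 1}`.
-/

open MeasureTheory Real Set Module
open scoped ENNReal NNReal

section LayerCake

variable {α : Type*} [MeasurableSpace α] (μ : Measure α) [SFinite μ] {g : α → ℝ}

theorem lintegral_exp_neg_eq_lintegral_meas_lt_mul (hg : Measurable g) :
    ∫⁻ x, ENNReal.ofReal (exp (-g x)) ∂μ =
      ∫⁻ u, μ {x | g x < u} * ENNReal.ofReal (exp (-u)) := by
  have hexp (a : ℝ) : ENNReal.ofReal (exp (-a)) = ∫⁻ u in Ioi a, ENNReal.ofReal (exp (-u)) := by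
    rw [← integral_exp_neg_Ioi a, ofReal_integral_eq_lintegral_ofReal (integrableOn_exp_neg_Ioi a)
      (ae_of_all _ fun u => (exp_pos _).le)]
  let F : α → ℝ → ℝ≥0∞ := fun x u => (Ioi (g x)).indicator (fun u => ENNReal.ofReal (exp (-u))) u
  have hF : Measurable (Function.uncurry F) :=
    (by fun_prop : Measurable fun q : α × ℝ => ENNReal.ofReal (exp (-q.2))).indicator
      (measurableSet_lt (hg.comp measurable_fst) measurable_snd)
  calc ∫⁻ x, ENNReal.ofReal (exp (-g x)) ∂μ = ∫⁻ x, (∫⁻ u, F x u) ∂μ := by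
        refine lintegral_congr fun x => ?_
        rw [hexp, lintegral_indicator measurableSet_Ioi]
    _ = ∫⁻ u, ∫⁻ x, F x u ∂μ := lintegral_lintegral_swap hF.aemeasurable
    _ = ∫⁻ u, μ {x | g x < u} * ENNReal.ofReal (exp (-u)) := by
        refine lintegral_congr fun u => ?_
        rw [mul_comm, ← lintegral_indicator_const (measurableSet_lt hg measurable_const)]
        rfl

theorem lintegral_exp_neg_eq_Gamma_mul_meas_lt_one (hg : Measurable g) (hg0 : ∀ x, 0 ≤ g x)
    {s : ℝ} (hs : -1 < s)
    (hscale : ∀ t, 0 < t → μ {x | g x < t} = ENNReal.ofReal (t ^ s) * μ {x | g x < 1}) :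
    ∫⁻ x, ENNReal.ofReal (exp (-g x)) ∂μ = ENNReal.ofReal (Gamma (s + 1)) * μ {x | g x < 1} := by
  have hempty : ∀ u ≤ 0, μ {x | g x < u} = 0 := fun u hu => by
    rw [show {x | g x < u} = ∅ from
      eq_empty_of_forall_notMem fun x hx => (hg0 x).not_gt (hx.out.trans_le hu), measure_empty]
  have hintegrable := GammaIntegral_convergent (s := s + 1) (by linarith)
  rw [add_sub_cancel_right] at hintegrable
  calc ∫⁻ x, ENNReal.ofReal (exp (-g x)) ∂μ
      = ∫⁻ u in Ioi 0, μ {x | g x < u} * ENNReal.ofReal (exp (-u)) := by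
        rw [lintegral_exp_neg_eq_lintegral_meas_lt_mul μ hg, setLIntegral_eq_of_support_subset
          (Function.support_subset_iff'.2 fun u hu => by simp [hempty u (not_lt.1 hu)])]
    _ = ∫⁻ u in Ioi 0, ENNReal.ofReal (exp (-u) * u ^ s) * μ {x | g x < 1} := by
        refine setLIntegral_congr_fun measurableSet_Ioi fun u hu => ?_
        rw [hscale u hu, ENNReal.ofReal_mul (exp_pos _).le]
        ring
    _ = ENNReal.ofReal (Gamma (s + 1)) * μ {x | g x < 1} := by
        rw [lintegral_mul_const _ (by fun_prop), ← ofReal_integral_eq_lintegral_ofReal hintegrable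
          ((ae_restrict_iff' measurableSet_Ioi).2 (ae_of_all _ fun u (hu : 0 < u) => by positivity)),
          Gamma_eq_integral (by linarith), add_sub_cancel_right]

end LayerCake

theorem MeasureTheory.Measure.pi_smul {ι : Type*} [Fintype ι] {α : ι → Type*}
    [∀ i, MeasurableSpace (α i)] (μ : ∀ i, Measure (α i)) [∀ i, SigmaFinite (μ i)]
    (d : ι → ℝ≥0) : Measure.pi (fun i => d i • μ i) = (∏ i, d i) • Measure.pi μ := by
  refine Measure.pi_eq fun s _ => ?_
  simp only [Measure.smul_apply, Measure.pi_pi, smul_eq_mul, ENNReal.smul_def,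
    ENNReal.ofNNReal_finsetProd, ← Finset.prod_mul_distrib]

theorem MeasureTheory.Measure.addHaar_pi_preimage_smul {ι : Type*} [Fintype ι] {E : Type*}
    [NormedAddCommGroup E] [NormedSpace ℝ E] [FiniteDimensional ℝ E] [MeasurableSpace E]
    [BorelSpace E] (μ : Measure E) [IsAddHaarMeasure μ] {c : ι → ℝ} (hc : ∀ i, c i ≠ 0)
    {A : Set (ι → E)} (hA : MeasurableSet A) :
    Measure.pi (fun _ => μ) ((fun z i => c i • z i) ⁻¹' A) =
      (∏ i, ENNReal.ofReal |(c i ^ finrank ℝ E)⁻¹|) * Measure.pi (fun _ => μ) A := by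
  have hmp : MeasurePreserving (fun (z : ι → E) i => c i • z i) (Measure.pi fun _ => μ)
      (Measure.pi fun i => (|(c i ^ finrank ℝ E)⁻¹|).toNNReal • μ) :=
    measurePreserving_pi _ _ fun i =>
      ⟨(continuous_const_smul (c i)).measurable, Measure.map_addHaar_smul μ (hc i)⟩
  rw [hmp.measure_preimage hA.nullMeasurableSet, Measure.pi_smul, Measure.smul_apply,
    ENNReal.smul_def, smul_eq_mul, ENNReal.ofNNReal_finsetProd]
  rfl

theorem Complex.integral_exp_neg_norm_pow {q : ℕ} (hq : 0 < q) :
    ∫ w : ℂ, rexp (-‖w‖ ^ q) = π * Real.Gamma (2 / q + 1) := by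
  simpa only [rpow_natCast] using Complex.integral_exp_neg_rpow (p := q) (by exact_mod_cast hq)

-- Also at the poles of `Γ`, where Mathlib's `Gamma` is `0` and `x / 0 = 0`.
theorem Real.div_Gamma_add_one (s : ℝ) : s / Gamma (s + 1) = (Gamma s)⁻¹ := by
  rcases eq_or_ne s 0 with rfl | hs
  · simp [Gamma_zero]
  · rw [Gamma_add_one hs, div_mul_cancel_left₀ hs]

noncomputable def sumNormPow {ι : Type*} [Fintype ι] (p : ι → ℕ) (z : ι → ℂ) : ℝ :=
  ∑ j, ‖z j‖ ^ (2 * p j)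

section SumNormPow

variable {ι : Type*} [Fintype ι] (p : ι → ℕ)

@[fun_prop]
theorem continuous_sumNormPow : Continuous (sumNormPow p) := by
  unfold sumNormPow
  fun_prop

theorem sumNormPow_nonneg (z : ι → ℂ) : 0 ≤ sumNormPow p z :=
  Finset.sum_nonneg fun _ _ => by positivity

variable {p}

theorem sumNormPow_rpow_smul (hp : ∀ j, 0 < p j) {t : ℝ} (ht : 0 < t) (z : ι → ℂ) :
    sumNormPow p (fun j => t ^ (-(1 / (2 * p j : ℝ))) • z j) = t⁻¹ * sumNormPow p z := by
  simp only [sumNormPow, Finset.mul_sum, norm_smul, mul_pow,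
    norm_of_nonneg (rpow_pos_of_pos ht _).le]
  refine Finset.sum_congr rfl fun j _ => ?_
  rw [← rpow_mul_natCast ht.le, ← rpow_neg_one]
  congr 2
  have : (p j : ℝ) ≠ 0 := by exact_mod_cast (hp j).ne'
  push_cast
  field_simp

theorem volume_sumNormPow_lt (hp : ∀ j, 0 < p j) {t : ℝ} (ht : 0 < t) :
    volume {z | sumNormPow p z < t} =
      ENNReal.ofReal (t ^ ∑ j, (1 : ℝ) / p j) * volume {z | sumNormPow p z < 1} := by
  have hpre : (fun z j => t ^ (-(1 / (2 * p j : ℝ))) • z j) ⁻¹' {z | sumNormPow p z < 1} =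
      {z | sumNormPow p z < t} := by
    ext z
    simp only [mem_preimage, mem_ofPred_eq, sumNormPow_rpow_smul hp ht, inv_mul_lt_iff₀ ht,
      mul_one]
  have hfactor (j : ι) :
      |((t ^ (-(1 / (2 * p j : ℝ)))) ^ finrank ℝ ℂ)⁻¹| = t ^ ((1 : ℝ) / p j) := by
    have : (p j : ℝ) ≠ 0 := by exact_mod_cast (hp j).ne'
    rw [Complex.finrank_real_complex, ← rpow_mul_natCast ht.le, ← rpow_neg ht.le,
      abs_of_pos (rpow_pos_of_pos ht _)]
    congr 1
    push_cast
    field_simp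
  rw [← hpre, volume_pi, Measure.addHaar_pi_preimage_smul _ (fun j => (rpow_pos_of_pos ht _).ne')
    ((isOpen_lt (continuous_sumNormPow p) continuous_const).measurableSet)]
  simp only [hfactor]
  rw [← ENNReal.ofReal_prod_of_nonneg (fun j _ => (rpow_pos_of_pos ht _).le), ← rpow_sum_of_pos ht]

theorem integral_exp_neg_sumNormPow (hp : ∀ j, 0 < p j) :
    ∫ z, exp (-sumNormPow p z) = π ^ Fintype.card ι * ∏ j, Gamma (1 / p j + 1) := by
  have hexp (z : ι → ℂ) : exp (-sumNormPow p z) = ∏ j, exp (-‖z j‖ ^ (2 * p j)) := by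
    rw [sumNormPow, ← Finset.sum_neg_distrib, exp_sum]
  simp_rw [hexp]
  have hfactor (j : ι) : ∫ w : ℂ, exp (-‖w‖ ^ (2 * p j)) = π * Gamma (1 / p j + 1) := by
    have : (p j : ℝ) ≠ 0 := by exact_mod_cast (hp j).ne'
    rw [Complex.integral_exp_neg_norm_pow (by linarith [hp j])]
    push_cast
    field_simp
  rw [volume_pi, integral_fintype_prod_eq_prod (fun j (w : ℂ) => exp (-‖w‖ ^ (2 * p j))),
    Finset.prod_congr rfl fun j _ => hfactor j, Finset.prod_mul_distrib, Finset.prod_const,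
    Finset.card_univ]

theorem volume_sumNormPow_lt_one (hp : ∀ j, 0 < p j) :
    volume {z | sumNormPow p z < 1} = ENNReal.ofReal
      (π ^ Fintype.card ι * (∏ j, Gamma (1 / p j + 1)) / Gamma (∑ j, (1 : ℝ) / p j + 1)) := by
  set S := ∑ j, (1 : ℝ) / p j
  have hS : 0 ≤ S := Finset.sum_nonneg fun j _ => by positivity
  have hΓ : 0 < Gamma (S + 1) := Gamma_pos_of_pos (by linarith)
  have hI : 0 < π ^ Fintype.card ι * ∏ j, Gamma (1 / p j + 1) :=
    mul_pos (pow_pos pi_pos _) (Finset.prod_pos fun j _ => Gamma_pos_of_pos (by positivity))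
  have hkey := lintegral_exp_neg_eq_Gamma_mul_meas_lt_one volume
    (continuous_sumNormPow p).measurable (sumNormPow_nonneg p) (by linarith : -1 < S)
    fun t ht => volume_sumNormPow_lt hp ht
  rw [← ofReal_integral_eq_lintegral_ofReal
    (Integrable.of_integral_ne_zero (by rw [integral_exp_neg_sumNormPow hp]; exact hI.ne'))
    (ae_of_all _ fun z => (exp_pos _).le), integral_exp_neg_sumNormPow hp] at hkey
  rw [div_eq_inv_mul, ENNReal.ofReal_mul (inv_nonneg.2 hΓ.le), hkey, ← mul_assoc,
    ← ENNReal.ofReal_mul (inv_nonneg.2 hΓ.le), inv_mul_cancel₀ hΓ.ne', ENNReal.ofReal_one, one_mul]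

end SumNormPow

theorem hypersurface_measure_sphere_general (n : ℕ) (p : Fin n → ℕ)
    (hp : ∀ j, 0 < p j) :
    HasDerivAt
      (fun r : ℝ =>
        (volume {z : Fin n → ℂ | ∑ j, ‖z j‖ ^ (2 * p j) < r ^ 2}).toReal)
      (2 * π ^ n * (∏ j, Real.Gamma (1 / p j)) /
        ((∏ j, (p j : ℝ)) * Real.Gamma (∑ j, (1 : ℝ) / p j))) 1 := by
  set S := ∑ j, (1 : ℝ) / p j
  set C := π ^ n * (∏ j, Gamma (1 / p j + 1)) / Gamma (S + 1)
  have hvolume : (fun r : ℝ => (volume {z : Fin n → ℂ | sumNormPow p z < r ^ 2}).toReal)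
      =ᶠ[nhds 1] fun r => (r ^ 2) ^ S * C := by
    filter_upwards [eventually_gt_nhds one_pos] with r hr
    rw [volume_sumNormPow_lt hp (by positivity), volume_sumNormPow_lt_one hp, Fintype.card_fin,
      ENNReal.toReal_mul, ENNReal.toReal_ofReal (by positivity),
      ENNReal.toReal_ofReal (by positivity)]
  have hderiv : HasDerivAt (fun r : ℝ => (r ^ 2) ^ S * C) (2 * S * C) 1 := by
    simpa using
      ((hasDerivAt_pow 2 (1 : ℝ)).rpow_const (p := S) (Or.inl (by norm_num))).mul_const C
  have hvalue : 2 * S * C = 2 * π ^ n * (∏ j, Gamma (1 / p j)) /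
      ((∏ j, (p j : ℝ)) * Gamma S) := by
    have hfactor (j : Fin n) : Gamma (1 / p j + 1) = Gamma (1 / p j) / p j := by
      have : (p j : ℝ) ≠ 0 := by exact_mod_cast (hp j).ne'
      rw [Gamma_add_one (by positivity)]
      field_simp
    simp only [C, hfactor, Finset.prod_div_distrib]
    rw [div_eq_mul_inv _ (_ * Gamma S), mul_inv, ← div_Gamma_add_one S]
    ring
  exact hvalue ▸ hderiv.congr_of_eventuallyEq hvolume

/-- The un-normalized hypersurface measure `S(1)` of `𝕊_p^n`, defined through
`V(r) = ∫_0^r S(x) dx` (so that `S(1) = V'(1)` where `V(r)` is the Lebesgue volume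
of `Ω_p^n(r)`), equals `2πⁿ ∏ Γ(1/p_j) / ((∏ p_j) Γ(Σ 1/p_j))`. -/
theorem hypersurface_measure_sphere (n : ℕ) (hn : 0 < n) (p : Fin n → ℕ)
    (hp : ∀ j, 0 < p j) :
    HasDerivAt
      (fun r : ℝ =>
        (volume {z : Fin n → ℂ | ∑ j, ‖z j‖ ^ (2 * p j) < r ^ 2}).toReal)
      (2 * π ^ n * (∏ j, Real.Gamma (1 / p j)) /
        ((∏ j, (p j : ℝ)) * Real.Gamma (∑ j, (1 : ℝ) / p j))) 1 :=
  hypersurface_measure_sphere_general n p hp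
end

section
/- Suppose τ ∈ 𝕋ⁿ satisfies ∏_{t=1}^n τ_t^{Λ(p)_t(ν_t − μ_t)} = 1 for all ν, μ ∈ ℕⁿ satisfying: ν ⊥ μ, Σ_{t ∈ block j} Λ(p)_t(ν_t−μ_t) = 0 for all j, and ν supported on indices > k̂_{j−1}+h_j within no block while μ supported on the first h_j indices of each block (the (k,h)-support condition). Then τ^{lcm(p)} ∈ 𝕋^s_k, i.e., the coordinates of (τ_t^{lcm(p)})_t are constant on each block. -/
/-!
Test the invariance against a pair of Dirac masses: `ν = p_a δ_a` and `μ = p_b δ_b` with `a` among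
the first `h_j` indices of block `j` and `b` among the others. Since `Λ(p)_t p_t = lcm(p)`, both
block sums equal `lcm(p)` and the invariance reads `τ_a^{lcm(p)} = τ_b^{lcm(p)}`. Every index of
a block is linked in this way to an index on the other side of the cut `h_j`, so `τ^{lcm(p)}` is
constant on the block.
-/

theorem apply_eq_apply_of_eq_across {α β : Type*} (P : α → Prop) (f : α → β) {a₀ b₀ : α}
    (ha₀ : P a₀) (hb₀ : ¬P b₀) (hf : ∀ a b, P a → ¬P b → f a = f b) (x y : α) : f x = f y := by
  by_cases hx : P x <;> by_cases hy : P y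
  · exact (hf x b₀ hx hb₀).trans (hf y b₀ hy hb₀).symm
  · exact hf x y hx hy
  · exact (hf y x hy hx).symm
  · exact (hf a₀ x ha₀ hx).symm.trans (hf a₀ y ha₀ hy)

section PiSingle

variable {ι : Type*} [DecidableEq ι]

theorem Pi.single_mul_single_of_ne {M : Type*} [MulZeroClass M] {a b : ι} (hab : a ≠ b)
    (m n : M) (t : ι) : (Pi.single a m : ι → M) t * (Pi.single b n : ι → M) t = 0 := by
  by_cases ht : t = a
  · subst ht; simp [hab]
  · simp [ht]

variable [Fintype ι]

theorem Fintype.sum_mul_single (w : ι → ℤ) (a : ι) (m : ℕ) :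
    ∑ t, w t * ((Pi.single a m : ι → ℕ) t : ℤ) = w a * m := by
  rw [Fintype.sum_eq_single a fun t ht => by rw [Pi.single_eq_of_ne ht, Nat.cast_zero, mul_zero],
    Pi.single_eq_same]

theorem Fintype.prod_zpow_mul_single {G : Type*} [CommGroup G] (τ : ι → G) (w : ι → ℤ) (a : ι)
    (m : ℕ) : ∏ t, τ t ^ (w t * ((Pi.single a m : ι → ℕ) t : ℤ)) = τ a ^ (w a * m) := by
  rw [Fintype.prod_eq_single a fun t ht => by
      rw [Pi.single_eq_of_ne ht, Nat.cast_zero, mul_zero, zpow_zero],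
    Pi.single_eq_same]

theorem Fintype.prod_zpow_mul_single_sub_single {G : Type*} [CommGroup G] (τ : ι → G)
    (w : ι → ℤ) (a b : ι) (m n : ℕ) :
    ∏ t, τ t ^ (w t * (((Pi.single a m : ι → ℕ) t : ℤ) - (Pi.single b n : ι → ℕ) t)) =
      τ a ^ (w a * m) / τ b ^ (w b * n) := by
  simp only [mul_sub, zpow_sub, Finset.prod_mul_distrib, Finset.prod_inv_distrib,
    Fintype.prod_zpow_mul_single, div_eq_mul_inv]

end PiSingle

theorem Fintype.sum_mul_single_sigma {σ : Type*} {κ : σ → Type*} [DecidableEq σ]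
    [∀ j, DecidableEq (κ j)] [∀ j, Fintype (κ j)] (w : (Σ j, κ j) → ℤ) (a : Σ j, κ j) (m : ℕ)
    (j : σ) : ∑ t : κ j, w ⟨j, t⟩ * ((Pi.single a m : (Σ j, κ j) → ℕ) ⟨j, t⟩ : ℤ) =
      if j = a.1 then w a * m else 0 := by
  obtain ⟨j₀, i₀⟩ := a
  split_ifs with hj
  · subst hj
    refine (Finset.sum_congr rfl fun t _ => ?_).trans (Fintype.sum_mul_single (w ⟨j, ·⟩) i₀ m)
    simp only [Pi.single_apply, Sigma.mk.inj_iff, heq_iff_eq, true_and]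
  · refine Finset.sum_eq_zero fun t _ => ?_
    rw [Pi.single_eq_of_ne (by rintro ⟨⟩; exact hj rfl), Nat.cast_zero, mul_zero]

theorem invariance_implies_block_constant_general (s : ℕ) (k : Fin s → ℕ)
    (p : ((j : Fin s) × Fin (k j)) → ℕ)
    (h : Fin s → ℕ) (hh : ∀ j, 1 ≤ h j ∧ h j ≤ k j - 1)
    (τ : ((j : Fin s) × Fin (k j)) → Circle)
    (hτ : ∀ ν μ : ((j : Fin s) × Fin (k j)) → ℕ,
      (∀ t, ν t * μ t = 0) →
      (∀ j : Fin s, ∑ t : Fin (k j),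
        (((Finset.univ.lcm p) / p ⟨j, t⟩ : ℕ) : ℤ) * ((ν ⟨j, t⟩ : ℤ) - μ ⟨j, t⟩) = 0) →
      (∀ (j : Fin s) (i : Fin (k j)), h j ≤ (i : ℕ) → ν ⟨j, i⟩ = 0) →
      (∀ (j : Fin s) (i : Fin (k j)), (i : ℕ) < h j → μ ⟨j, i⟩ = 0) →
      ∏ t, τ t ^ ((((Finset.univ.lcm p) / p t : ℕ) : ℤ) * ((ν t : ℤ) - μ t)) = 1) :
    ∀ (j : Fin s) (i₁ i₂ : Fin (k j)),
      τ ⟨j, i₁⟩ ^ (Finset.univ.lcm p) = τ ⟨j, i₂⟩ ^ (Finset.univ.lcm p) := by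
  intro j
  set L := Finset.univ.lcm p
  set w : ((j : Fin s) × Fin (k j)) → ℤ := fun t => ((L / p t : ℕ) : ℤ)
  have hw : ∀ t, w t * p t = L := fun t => by
    have hdvd : p t ∣ L := Finset.dvd_lcm (Finset.mem_univ t)
    simp only [w]
    exact_mod_cast Nat.div_mul_cancel hdvd
  have across : ∀ i₁ i₂ : Fin (k j), (i₁ : ℕ) < h j → ¬(i₂ : ℕ) < h j →
      τ ⟨j, i₁⟩ ^ L = τ ⟨j, i₂⟩ ^ L := by
    intro i₁ i₂ h₁ h₂
    have hne : (⟨j, i₁⟩ : (j : Fin s) × Fin (k j)) ≠ ⟨j, i₂⟩ := by rintro ⟨⟩; exact h₂ h₁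
    have hprod := hτ (Pi.single ⟨j, i₁⟩ (p ⟨j, i₁⟩)) (Pi.single ⟨j, i₂⟩ (p ⟨j, i₂⟩))
      (Pi.single_mul_single_of_ne hne _ _)
      (fun j' => by
        simp only [mul_sub, Finset.sum_sub_distrib]
        rw [Fintype.sum_mul_single_sigma w, Fintype.sum_mul_single_sigma w, hw, hw, sub_self])
      (fun j' i hi => Pi.single_eq_of_ne (by rintro ⟨⟩; omega) _)
      (fun j' i hi => Pi.single_eq_of_ne (by rintro ⟨⟩; omega) _)
    rw [Fintype.prod_zpow_mul_single_sub_single τ w, hw, hw, div_eq_one] at hprod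
    exact_mod_cast hprod
  have hlt : h j < k j := by have := hh j; omega
  exact apply_eq_apply_of_eq_across (fun i : Fin (k j) => (i : ℕ) < h j) (τ ⟨j, ·⟩ ^ L)
    (a₀ := ⟨0, by omega⟩) (b₀ := ⟨h j, hlt⟩) (hh j).1 (lt_irrefl _) across

/-- If `τ ∈ 𝕋ⁿ` satisfies `∏_t τ_t^{Λ(p)_t (ν_t - μ_t)} = 1` for all orthogonal
`ν, μ ∈ ℕⁿ` satisfying the block-sum condition `Σ_{t ∈ block j} Λ(p)_t(ν_t-μ_t) = 0`
and the `(k,h)`-support condition (`ν` vanishes past the first `h_j` indices of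
each block, `μ` vanishes on the first `h_j` indices), then `τ^{lcm(p)}` is
constant on each block. -/
theorem invariance_implies_block_constant (s : ℕ) (k : Fin s → ℕ) (hk : ∀ j, 0 < k j)
    (p : ((j : Fin s) × Fin (k j)) → ℕ) (hp : ∀ t, 0 < p t)
    (h : Fin s → ℕ) (hh : ∀ j, 1 ≤ h j ∧ h j ≤ k j - 1)
    (τ : ((j : Fin s) × Fin (k j)) → Circle)
    (hτ : ∀ ν μ : ((j : Fin s) × Fin (k j)) → ℕ,
      (∀ t, ν t * μ t = 0) →
      (∀ j : Fin s, ∑ t : Fin (k j),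
        (((Finset.univ.lcm p) / p ⟨j, t⟩ : ℕ) : ℤ) * ((ν ⟨j, t⟩ : ℤ) - μ ⟨j, t⟩) = 0) →
      (∀ (j : Fin s) (i : Fin (k j)), h j ≤ (i : ℕ) → ν ⟨j, i⟩ = 0) →
      (∀ (j : Fin s) (i : Fin (k j)), (i : ℕ) < h j → μ ⟨j, i⟩ = 0) →
      ∏ t, τ t ^ ((((Finset.univ.lcm p) / p t : ℕ) : ℤ) * ((ν t : ℤ) - μ t)) = 1) :
    ∀ (j : Fin s) (i₁ i₂ : Fin (k j)),
      τ ⟨j, i₁⟩ ^ (Finset.univ.lcm p) = τ ⟨j, i₂⟩ ^ (Finset.univ.lcm p) :=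
  invariance_implies_block_constant_general s k p h hh τ hτ
end
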